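/- (RLL relation for the spin-type Lax operator.) Let F = Σ_{i,j=1}^{2n} e_{ij} ⊗ F_{ij} be a 2n×2n matrix with entries F_{ij} ∈ 𝒜 satisfying, for all 1 ≤ i, j, k, l ≤ 2n, the relations [F_{ij}, F_{kl}] = δ_{jk} F_{il} − δ_{il} F_{kj} + θ_{ij} δ_{j,l̄} F_{k,ī} − θ_{ij} δ_{i,k̄} F_{j̄,l} and F_{ij} + θ_{ij} F_{j̄ ī} = 0, and suppose moreover F² = k(k+κ) I + κ F for some scalar k ∈ ℂ (an identity of 2n×2n matrices over 𝒜). Then the Lax operator ℒ(u) := I + F/(u − κ/2) satisfies R(u−v) ℒ₁(u) ℒ₂(v) = ℒ₂(v) ℒ₁(u) R(u−v), an identity of operators on ℂ^{2n} ⊗ ℂ^{2n} with entries in 𝒜 ⊗ ℂ(u,v), where R is the Zamolodchikov R-matrix. -/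
import Mathlib


open Matrix
open scoped Kronecker

noncomputable section

def theta (n : ℕ) (ε : ℂ) (i : Fin (2 * n)) : ℂ := if (i : ℕ) < n then ε else 1

def bar {m : ℕ} (i : Fin m) : Fin m := i.rev

def kap (n : ℕ) (ε : ℂ) : ℂ := (n : ℂ) - ε

section Defs

variable (n : ℕ) (ε : ℂ) {A : Type*} [Ring A] [Algebra ℂ A]

/-- permutation operator `P` on `ℂ^{2n} ⊗ ℂ^{2n}` (over `A`) -/
def PA2 : Matrix (Fin (2*n) × Fin (2*n)) (Fin (2*n) × Fin (2*n)) A :=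
  Matrix.of fun p q => if p.1 = q.2 ∧ p.2 = q.1 then 1 else 0

/-- `Q = P^{t₁}` on `ℂ^{2n} ⊗ ℂ^{2n}` (over `A`) -/
def QA2 : Matrix (Fin (2*n) × Fin (2*n)) (Fin (2*n) × Fin (2*n)) A :=
  Matrix.of fun p q =>
    if p.2 = bar p.1 ∧ q.2 = bar q.1 then
      algebraMap ℂ A (theta n ε p.1 * theta n ε q.1) else 0

/-- the Zamolodchikov R-matrix `R(u) = I - P/u + Q/(u-κ)` (over `A`) -/
def RA2 (u : ℂ) : Matrix (Fin (2*n) × Fin (2*n)) (Fin (2*n) × Fin (2*n)) A :=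
  (1 : Matrix (Fin (2*n) × Fin (2*n)) (Fin (2*n) × Fin (2*n)) A)
    - u⁻¹ • PA2 n + (u - kap n ε)⁻¹ • QA2 n ε

/-- the Lax operator `ℒ(u) = I + F/(u - κ/2)` -/
def LaxM (F : Matrix (Fin (2*n)) (Fin (2*n)) A) (u : ℂ) :
    Matrix (Fin (2*n)) (Fin (2*n)) A :=
  (1 : Matrix (Fin (2*n)) (Fin (2*n)) A) + (u - kap n ε / 2)⁻¹ • F

end Defs

section Aux2
variable {n : ℕ} {ε : ℂ} {A : Type*} [Ring A] [Algebra ℂ A]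

lemma bar_bar' (i : Fin (2*n)) : bar (bar i) = i := Fin.rev_rev i

lemma bar_eq_iff' {i j : Fin (2*n)} : i = bar j ↔ j = bar i := by
  constructor <;> (rintro rfl; rw [bar_bar'])

theorem theta_sq' (hε : ε = 1 ∨ ε = -1) (i : Fin (2*n)) :
    theta n ε i * theta n ε i = 1 := by
  rcases hε with h | h <;> simp [theta, h] <;> split <;> norm_num

theorem theta_bar' (hε : ε = 1 ∨ ε = -1) (i : Fin (2*n)) :
    theta n ε (bar i) = ε * theta n ε i := by
  have hb : ((bar i : Fin (2*n)) : ℕ) = 2*n - (i+1) := Fin.val_rev i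
  have hiff : (((bar i : Fin (2*n)) : ℕ) < n) ↔ ¬((i:ℕ) < n) := by
    rw [hb]; have := i.isLt; omega
  rcases hε with h | h <;>
  · simp only [theta, hiff, h]
    by_cases hi : (i:ℕ) < n <;> simp [hi]

variable (F : Matrix (Fin (2*n)) (Fin (2*n)) A)

lemma F1F2_apply (G : Matrix (Fin (2*n)) (Fin (2*n)) A) (p q : Fin (2*n) × Fin (2*n)) :
    (((F ⊗ₖ (1:Matrix (Fin (2*n)) (Fin (2*n)) A)) * ((1:Matrix (Fin (2*n)) (Fin (2*n)) A) ⊗ₖ G) : Matrix (Fin (2*n) × Fin (2*n)) (Fin (2*n) × Fin (2*n)) A)) p q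
      = F p.1 q.1 * G p.2 q.2 := by
  rw [Matrix.mul_apply, Finset.sum_eq_single (q.1, p.2)]
  · simp [Matrix.one_apply]
  · rintro ⟨k, k'⟩ - hne
    simp only [Matrix.kroneckerMap_apply, Matrix.one_apply]
    rcases eq_or_ne k q.1 with rfl | h1
    · rcases eq_or_ne p.2 k' with rfl | h2
      · exact absurd rfl hne
      · simp [h2]
    · simp [h1]
  · simp

lemma F2F1_apply (G : Matrix (Fin (2*n)) (Fin (2*n)) A) (p q : Fin (2*n) × Fin (2*n)) :
    ((((1:Matrix (Fin (2*n)) (Fin (2*n)) A) ⊗ₖ G) * (F ⊗ₖ (1:Matrix (Fin (2*n)) (Fin (2*n)) A)) : Matrix (Fin (2*n) × Fin (2*n)) (Fin (2*n) × Fin (2*n)) A)) p q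
      = G p.2 q.2 * F p.1 q.1 := by
  rw [Matrix.mul_apply, Finset.sum_eq_single (p.1, q.2)]
  · simp [Matrix.one_apply]
  · rintro ⟨k, k'⟩ - hne
    simp only [Matrix.kroneckerMap_apply, Matrix.one_apply]
    rcases eq_or_ne p.1 k with rfl | h1
    · rcases eq_or_ne k' q.2 with rfl | h2
      · exact absurd rfl hne
      · simp [h2]
    · simp [h1]
  · simp

lemma F1P_apply (p q : Fin (2*n) × Fin (2*n)) :
    (((F ⊗ₖ (1:Matrix (Fin (2*n)) (Fin (2*n)) A)) * PA2 n : Matrix (Fin (2*n) × Fin (2*n)) (Fin (2*n) × Fin (2*n)) A)) p q = if p.2 = q.1 then F p.1 q.2 else 0 := by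
  rw [Matrix.mul_apply, Finset.sum_eq_single (q.2, q.1)]
  · by_cases h : p.2 = q.1 <;> simp [PA2, Matrix.one_apply, h]
  · rintro ⟨k, k'⟩ - hne
    simp only [Matrix.kroneckerMap_apply, Matrix.one_apply, PA2, Matrix.of_apply]
    rcases eq_or_ne k q.2 with rfl | h1
    · rcases eq_or_ne k' q.1 with rfl | h2
      · exact absurd rfl hne
      · simp [h2]
    · simp [h1]
  · simp

lemma F2P_apply (p q : Fin (2*n) × Fin (2*n)) :
    ((((1:Matrix (Fin (2*n)) (Fin (2*n)) A) ⊗ₖ F) * PA2 n : Matrix (Fin (2*n) × Fin (2*n)) (Fin (2*n) × Fin (2*n)) A)) p q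
      = if p.1 = q.2 then F p.2 q.1 else 0 := by
  rw [Matrix.mul_apply, Finset.sum_eq_single (q.2, q.1)]
  · by_cases h : p.1 = q.2 <;> simp [PA2, Matrix.one_apply, h]
  · rintro ⟨k, k'⟩ - hne
    simp only [Matrix.kroneckerMap_apply, Matrix.one_apply, PA2, Matrix.of_apply]
    rcases eq_or_ne k q.2 with rfl | h1
    · rcases eq_or_ne k' q.1 with rfl | h2
      · exact absurd rfl hne
      · simp [h2]
    · simp [h1]
  · simp [PA2]


lemma P_mul_F1 (F : Matrix (Fin (2*n)) (Fin (2*n)) A) :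
    PA2 n * (F ⊗ₖ (1:Matrix (Fin (2*n)) (Fin (2*n)) A))
      = ((1:Matrix (Fin (2*n)) (Fin (2*n)) A) ⊗ₖ F) * PA2 n := by
  ext p q
  simp [PA2, Matrix.mul_apply, Matrix.one_apply, Fintype.sum_prod_type, ite_and,
    Finset.sum_ite_eq, Finset.sum_ite_eq', mul_ite, ite_mul]

lemma P_mul_F2 (F : Matrix (Fin (2*n)) (Fin (2*n)) A) :
    PA2 n * ((1:Matrix (Fin (2*n)) (Fin (2*n)) A) ⊗ₖ F)
      = (F ⊗ₖ (1:Matrix (Fin (2*n)) (Fin (2*n)) A)) * PA2 n := by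
  ext p q
  simp [PA2, Matrix.mul_apply, Matrix.one_apply, Fintype.sum_prod_type, ite_and,
    Finset.sum_ite_eq, Finset.sum_ite_eq', mul_ite, ite_mul]

lemma QF1_apply (p q : Fin (2*n) × Fin (2*n)) :
    ((QA2 n ε * (F ⊗ₖ (1:Matrix (Fin (2*n)) (Fin (2*n)) A)) : Matrix (Fin (2*n) × Fin (2*n)) (Fin (2*n) × Fin (2*n)) A)) p q
      = if p.2 = bar p.1 then
          (theta n ε p.1 * theta n ε (bar q.2)) • F (bar q.2) q.1 else 0 := by
  rw [Matrix.mul_apply, Finset.sum_eq_single ((bar q.2 : Fin (2*n)), q.2)]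
  · by_cases h : p.2 = bar p.1 <;>
      simp [QA2, Matrix.one_apply, h, bar_bar', Algebra.smul_def]
  · rintro ⟨k, k'⟩ - hne
    simp only [Matrix.kroneckerMap_apply, Matrix.one_apply, QA2, Matrix.of_apply, ite_and]
    rcases eq_or_ne k' q.2 with rfl | h1
    · rcases eq_or_ne q.2 (bar k) with h2 | h2
      · exact absurd (show (k, q.2) = ((bar q.2 : Fin (2*n)), q.2) from Prod.ext_iff.mpr ⟨bar_eq_iff'.mp h2, rfl⟩) hne
      · simp [h2]
    · simp [h1]
  · simp

lemma QF2_apply (p q : Fin (2*n) × Fin (2*n)) :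
    ((QA2 n ε * ((1:Matrix (Fin (2*n)) (Fin (2*n)) A) ⊗ₖ F) : Matrix (Fin (2*n) × Fin (2*n)) (Fin (2*n) × Fin (2*n)) A)) p q
      = if p.2 = bar p.1 then
          (theta n ε p.1 * theta n ε q.1) • F (bar q.1) q.2 else 0 := by
  rw [Matrix.mul_apply, Finset.sum_eq_single (q.1, (bar q.1 : Fin (2*n)))]
  · by_cases h : p.2 = bar p.1 <;>
      simp [QA2, Matrix.one_apply, h, bar_bar', Algebra.smul_def]
  · rintro ⟨k, k'⟩ - hne
    simp only [Matrix.kroneckerMap_apply, Matrix.one_apply, QA2, Matrix.of_apply, ite_and]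
    rcases eq_or_ne k q.1 with rfl | h1
    · rcases eq_or_ne k' (bar q.1) with rfl | h2
      · exact absurd rfl hne
      · simp [h2]
    · simp [h1]
  · simp

lemma mul_algebraMap' (x : A) (c : ℂ) : x * algebraMap ℂ A c = c • x := by
  rw [Algebra.smul_def, Algebra.commutes]

lemma F1Q_apply (p q : Fin (2*n) × Fin (2*n)) :
    (((F ⊗ₖ (1:Matrix (Fin (2*n)) (Fin (2*n)) A)) * QA2 n ε : Matrix (Fin (2*n) × Fin (2*n)) (Fin (2*n) × Fin (2*n)) A)) p q
      = if q.2 = bar q.1 then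
          (theta n ε (bar p.2) * theta n ε q.1) • F p.1 (bar p.2) else 0 := by
  rw [Matrix.mul_apply, Finset.sum_eq_single ((bar p.2 : Fin (2*n)), p.2)]
  · simp only [Matrix.kroneckerMap_apply, QA2, Matrix.of_apply, Matrix.one_apply_eq,
      mul_one, bar_bar']
    by_cases h : q.2 = bar q.1
    · rw [if_pos ⟨by trivial, h⟩, if_pos h]
      exact mul_algebraMap' _ _
    · rw [if_neg (fun hh => h hh.2), if_neg h, mul_zero]
  · rintro ⟨k, k'⟩ - hne
    simp only [Matrix.kroneckerMap_apply, Matrix.one_apply, QA2, Matrix.of_apply, ite_and]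
    rcases eq_or_ne k' p.2 with rfl | h1
    · rcases eq_or_ne p.2 (bar k) with h2 | h2
      · exact absurd (show (k, p.2) = ((bar p.2 : Fin (2*n)), p.2) from
          Prod.ext_iff.mpr ⟨bar_eq_iff'.mp h2, rfl⟩) hne
      · simp [h2]
    · simp [Matrix.one_apply, h1, Ne.symm h1]
  · simp

lemma F2Q_apply (p q : Fin (2*n) × Fin (2*n)) :
    ((((1:Matrix (Fin (2*n)) (Fin (2*n)) A) ⊗ₖ F) * QA2 n ε : Matrix (Fin (2*n) × Fin (2*n)) (Fin (2*n) × Fin (2*n)) A)) p q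
      = if q.2 = bar q.1 then
          (theta n ε p.1 * theta n ε q.1) • F p.2 (bar p.1) else 0 := by
  rw [Matrix.mul_apply, Finset.sum_eq_single (p.1, (bar p.1 : Fin (2*n)))]
  · simp only [Matrix.kroneckerMap_apply, QA2, Matrix.of_apply, Matrix.one_apply_eq,
      one_mul]
    by_cases h : q.2 = bar q.1
    · rw [if_pos ⟨by trivial, h⟩, if_pos h]
      exact mul_algebraMap' _ _
    · rw [if_neg (fun hh => h hh.2), if_neg h, mul_zero]
  · rintro ⟨k, k'⟩ - hne
    simp only [Matrix.kroneckerMap_apply, Matrix.one_apply, QA2, Matrix.of_apply, ite_and]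
    rcases eq_or_ne k p.1 with rfl | h1
    · rcases eq_or_ne k' (bar p.1) with rfl | h2
      · exact absurd rfl hne
      · simp [h2]
    · simp [Matrix.one_apply, h1, Ne.symm h1]
  · simp

end Aux2


section MatLemmas
variable {n : ℕ} {ε : ℂ} {A : Type*} [Ring A] [Algebra ℂ A]
variable (F : Matrix (Fin (2*n)) (Fin (2*n)) A)

lemma one_kron_mul (G : Matrix (Fin (2*n)) (Fin (2*n)) A) :
    (((1:Matrix (Fin (2*n)) (Fin (2*n)) A) ⊗ₖ F) * ((1:Matrix (Fin (2*n)) (Fin (2*n)) A) ⊗ₖ G)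
      : Matrix (Fin (2*n) × Fin (2*n)) (Fin (2*n) × Fin (2*n)) A)
    = (1:Matrix (Fin (2*n)) (Fin (2*n)) A) ⊗ₖ (F * G) := by
  ext p q
  simp [Matrix.mul_apply, Fintype.sum_prod_type, Matrix.one_apply, ite_and, mul_ite, ite_mul,
    Finset.sum_ite_eq, Finset.sum_ite_eq', Finset.mul_sum, Finset.sum_mul]

lemma Q_F1_eq (hε : ε = 1 ∨ ε = -1)
    (hanti : ∀ i j : Fin (2*n),
      F i j + (theta n ε i * theta n ε j) • F (bar j) (bar i) = 0) :
    QA2 n ε * (F ⊗ₖ (1:Matrix (Fin (2*n)) (Fin (2*n)) A))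
      = -(QA2 n ε * ((1:Matrix (Fin (2*n)) (Fin (2*n)) A) ⊗ₖ F)) := by
  ext p q
  rw [Matrix.neg_apply, QF1_apply, QF2_apply]
  by_cases h : p.2 = bar p.1
  · rw [if_pos h, if_pos h]
    have ha := eq_neg_of_add_eq_zero_left (hanti (bar q.1) q.2)
    rw [bar_bar'] at ha
    rw [ha, smul_neg, neg_neg, smul_smul]
    have hsc : theta n ε p.1 * theta n ε (bar q.2)
        = theta n ε p.1 * theta n ε q.1 * (theta n ε (bar q.1) * theta n ε q.2) := by
      rw [theta_bar' hε, theta_bar' hε]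
      linear_combination (-(theta n ε p.1 * ε * theta n ε q.2)) * theta_sq' hε q.1
    rw [hsc]
  · simp [h]

lemma F1_Q_eq (hε : ε = 1 ∨ ε = -1)
    (hanti : ∀ i j : Fin (2*n),
      F i j + (theta n ε i * theta n ε j) • F (bar j) (bar i) = 0) :
    (F ⊗ₖ (1:Matrix (Fin (2*n)) (Fin (2*n)) A)) * QA2 n ε
      = -(((1:Matrix (Fin (2*n)) (Fin (2*n)) A) ⊗ₖ F) * QA2 n ε) := by
  ext p q
  rw [Matrix.neg_apply, F1Q_apply, F2Q_apply]
  by_cases h : q.2 = bar q.1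
  · rw [if_pos h, if_pos h]
    have ha := eq_neg_of_add_eq_zero_left (hanti p.2 (bar p.1))
    rw [bar_bar'] at ha
    rw [ha, smul_neg, neg_neg, smul_smul]
    have hsc : theta n ε (bar p.2) * theta n ε q.1
        = theta n ε p.1 * theta n ε q.1 * (theta n ε p.2 * theta n ε (bar p.1)) := by
      rw [theta_bar' hε, theta_bar' hε]
      linear_combination (-(ε * theta n ε p.2 * theta n ε q.1)) * theta_sq' hε p.1
    rw [hsc]
  · simp [h]

lemma comm_L5 (hε : ε = 1 ∨ ε = -1)
    (hcomm : ∀ i j a b : Fin (2*n),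
      F i j * F a b - F a b * F i j
        = (if j = a then (1:ℂ) else 0) • F i b
          - (if i = b then (1:ℂ) else 0) • F a j
          + ((theta n ε i * theta n ε j) * (if j = bar b then (1:ℂ) else 0)) • F a (bar i)
          - ((theta n ε i * theta n ε j) * (if i = bar a then (1:ℂ) else 0)) • F (bar j) b)
    (hanti : ∀ i j : Fin (2*n),
      F i j + (theta n ε i * theta n ε j) • F (bar j) (bar i) = 0) :
    (F ⊗ₖ (1:Matrix (Fin (2*n)) (Fin (2*n)) A)) * ((1:Matrix (Fin (2*n)) (Fin (2*n)) A) ⊗ₖ F)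
      - ((1:Matrix (Fin (2*n)) (Fin (2*n)) A) ⊗ₖ F) * (F ⊗ₖ (1:Matrix (Fin (2*n)) (Fin (2*n)) A))
    = (F ⊗ₖ (1:Matrix (Fin (2*n)) (Fin (2*n)) A)) * PA2 n
      - ((1:Matrix (Fin (2*n)) (Fin (2*n)) A) ⊗ₖ F) * PA2 n
      + QA2 n ε * (F ⊗ₖ (1:Matrix (Fin (2*n)) (Fin (2*n)) A))
      - (F ⊗ₖ (1:Matrix (Fin (2*n)) (Fin (2*n)) A)) * QA2 n ε := by
  ext p q
  rw [Matrix.sub_apply, Matrix.sub_apply, Matrix.add_apply, Matrix.sub_apply,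
    F1F2_apply, F2F1_apply, F1P_apply, F2P_apply, QF1_apply, F1Q_apply]
  rw [hcomm p.1 q.1 p.2 q.2]
  have e1 : (if q.1 = p.2 then (1:ℂ) else 0) • F p.1 q.2
      = if p.2 = q.1 then F p.1 q.2 else 0 := by
    by_cases h : p.2 = q.1
    · rw [if_pos h.symm, if_pos h, one_smul]
    · rw [if_neg (fun hh => h hh.symm), if_neg h, zero_smul]
  have e2 : (if p.1 = q.2 then (1:ℂ) else 0) • F p.2 q.1
      = if p.1 = q.2 then F p.2 q.1 else 0 := by
    by_cases h : p.1 = q.2 <;> simp [h]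
  have e3 : ((theta n ε p.1 * theta n ε q.1) * (if q.1 = bar q.2 then (1:ℂ) else 0)) • F p.2 (bar p.1)
      = -(if q.2 = bar q.1 then
          (theta n ε (bar p.2) * theta n ε q.1) • F p.1 (bar p.2) else 0) := by
    by_cases h : q.2 = bar q.1
    · have h' : q.1 = bar q.2 := bar_eq_iff'.mp h
      rw [if_pos h', mul_one, if_pos h]
      have ha := eq_neg_of_add_eq_zero_left (hanti p.2 (bar p.1))
      rw [bar_bar'] at ha
      rw [ha, smul_neg, smul_smul]
      have hsc : theta n ε p.1 * theta n ε q.1 * (theta n ε p.2 * theta n ε (bar p.1))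
          = theta n ε (bar p.2) * theta n ε q.1 := by
        rw [theta_bar' hε, theta_bar' hε]
        linear_combination (ε * theta n ε p.2 * theta n ε q.1) * theta_sq' hε p.1
      rw [hsc]
    · have h' : ¬ q.1 = bar q.2 := fun hh => h (bar_eq_iff'.mp hh)
      rw [if_neg h', mul_zero, zero_smul, if_neg h, neg_zero]
  have e4 : ((theta n ε p.1 * theta n ε q.1) * (if p.1 = bar p.2 then (1:ℂ) else 0)) • F (bar q.1) q.2
      = -(if p.2 = bar p.1 then
          (theta n ε p.1 * theta n ε (bar q.2)) • F (bar q.2) q.1 else 0) := by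
    by_cases h : p.2 = bar p.1
    · have h' : p.1 = bar p.2 := bar_eq_iff'.mp h
      rw [if_pos h', mul_one, if_pos h]
      have ha := eq_neg_of_add_eq_zero_left (hanti (bar q.1) q.2)
      rw [bar_bar'] at ha
      rw [ha, smul_neg, smul_smul]
      have hsc : theta n ε p.1 * theta n ε q.1 * (theta n ε (bar q.1) * theta n ε q.2)
          = theta n ε p.1 * theta n ε (bar q.2) := by
        rw [theta_bar' hε, theta_bar' hε]
        linear_combination (theta n ε p.1 * ε * theta n ε q.2) * theta_sq' hε q.1
      rw [hsc]
    · have h' : ¬ p.1 = bar p.2 := fun hh => h (bar_eq_iff'.mp hh)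
      rw [if_neg h', mul_zero, zero_smul, if_neg h, neg_zero]
  rw [e1, e2, e3, e4]
  abel

end MatLemmas

lemma RLL_core {M : Type*} [Ring M] [Algebra ℂ M] (P Q F1 F2 : M) (a b c d κ kk : ℂ)
    (m1 : P * F1 = F2 * P) (m2 : P * F2 = F1 * P)
    (m3 : Q * F2 = -(Q * F1)) (m4 : F2 * Q = -(F1 * Q))
    (m6 : F2 * F2 = kk • (1:M) + κ • F2)
    (m5 : F1 * F2 - F2 * F1 = F1 * P - F2 * P + Q * F1 - F1 * Q)
    (sc1 : a * (c - d) = -(c * d))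
    (sc2 : b * (c - d + c * d * κ) = -(c * d)) :
    ((1:M) - a • P + b • Q) * ((1:M) + c • F1) * ((1:M) + d • F2)
      = ((1:M) + d • F2) * ((1:M) + c • F1) * ((1:M) - a • P + b • Q) := by
  have m3' : Q * F1 = -(Q * F2) := by rw [m3, neg_neg]
  have m4' : F1 * Q = -(F2 * Q) := by rw [m4, neg_neg]
  have r1 : P * (F1 * F2) = F2 * (F1 * P) := by
    calc P * (F1 * F2) = (P * F1) * F2 := by rw [mul_assoc]
    _ = F2 * (P * F2) := by rw [m1, mul_assoc]
    _ = F2 * (F1 * P) := by rw [m2]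
  have r4 : Q * (F1 * F2) = (-kk) • Q + κ • (Q * F1) := by
    calc Q * (F1 * F2) = (Q * F1) * F2 := by rw [mul_assoc]
    _ = -(Q * (F2 * F2)) := by rw [m3', neg_mul, mul_assoc]
    _ = -(kk • (Q * 1) + κ • (Q * F2)) := by
        rw [m6, mul_add, mul_smul_comm, mul_smul_comm]
    _ = (-kk) • Q + κ • (Q * F1) := by rw [mul_one, m3]; module
  have r7 : F2 * (F1 * Q) = (-kk) • Q + κ • (F1 * Q) := by
    calc F2 * (F1 * Q) = -((F2 * F2) * Q) := by rw [m4', mul_neg, mul_assoc]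
    _ = -(kk • ((1:M) * Q) + κ • (F2 * Q)) := by
        rw [m6, add_mul, smul_mul_assoc, smul_mul_assoc]
    _ = (-kk) • Q + κ • (F1 * Q) := by rw [one_mul, m4]; module
  have r6 : F1 * F2 = F1 * P - F2 * P + Q * F1 - F1 * Q + F2 * F1 :=
    sub_eq_iff_eq_add.mp m5
  simp only [mul_add, add_mul, sub_mul, mul_sub, mul_one, one_mul,
    smul_mul_assoc, mul_smul_comm, smul_smul, mul_assoc]
  simp only [r1, r4, r7, m1, m2, m3, m4]
  simp only [r6]
  simp only [mul_add, add_mul, sub_mul, mul_sub, mul_one, one_mul,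
    smul_mul_assoc, mul_smul_comm, smul_smul, smul_add, smul_sub, smul_neg, neg_smul]
  match_scalars
  any_goals ring
  any_goals linear_combination sc1
  any_goals linear_combination -1 * sc1
  any_goals linear_combination sc2
  any_goals linear_combination -1 * sc2



theorem statement16 (n : ℕ) (hn : 1 ≤ n) (ε : ℂ) (hε : ε = 1 ∨ ε = -1) (k : ℂ)
    {A : Type*} [Ring A] [Algebra ℂ A]
    (F : Matrix (Fin (2*n)) (Fin (2*n)) A)
    -- the defining relations of g_{2n}
    (hcomm : ∀ i j a b : Fin (2*n),
      F i j * F a b - F a b * F i j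
        = (if j = a then (1:ℂ) else 0) • F i b
          - (if i = b then (1:ℂ) else 0) • F a j
          + ((theta n ε i * theta n ε j) * (if j = bar b then (1:ℂ) else 0)) • F a (bar i)
          - ((theta n ε i * theta n ε j) * (if i = bar a then (1:ℂ) else 0)) • F (bar j) b)
    (hanti : ∀ i j : Fin (2*n),
      F i j + (theta n ε i * theta n ε j) • F (bar j) (bar i) = 0)
    -- the quadratic identity F² = k(k+κ) I + κ F
    (hsq : F * F
      = (k * (k + kap n ε)) • (1 : Matrix (Fin (2*n)) (Fin (2*n)) A) + kap n ε • F) :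
    -- the RLL relation
    ∀ u v : ℂ, u - v ≠ 0 → u - v - kap n ε ≠ 0 →
      u - kap n ε / 2 ≠ 0 → v - kap n ε / 2 ≠ 0 →
      RA2 n ε (u - v) * (LaxM n ε (F) u ⊗ₖ (1 : Matrix (Fin (2*n)) (Fin (2*n)) A))
          * ((1 : Matrix (Fin (2*n)) (Fin (2*n)) A) ⊗ₖ LaxM n ε F v)
        = ((1 : Matrix (Fin (2*n)) (Fin (2*n)) A) ⊗ₖ LaxM n ε F v)
          * (LaxM n ε F u ⊗ₖ (1 : Matrix (Fin (2*n)) (Fin (2*n)) A))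
          * RA2 n ε (u - v) := by
  intro u v h1 h2 h3 h4
  have hL1 : (LaxM n ε F u ⊗ₖ (1 : Matrix (Fin (2*n)) (Fin (2*n)) A))
      = (1 : Matrix (Fin (2*n) × Fin (2*n)) (Fin (2*n) × Fin (2*n)) A)
        + (u - kap n ε / 2)⁻¹ • (F ⊗ₖ (1:Matrix (Fin (2*n)) (Fin (2*n)) A)) := by
    rw [LaxM, Matrix.add_kronecker, Matrix.smul_kronecker, Matrix.one_kronecker_one]
  have hL2 : ((1 : Matrix (Fin (2*n)) (Fin (2*n)) A) ⊗ₖ LaxM n ε F v)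
      = (1 : Matrix (Fin (2*n) × Fin (2*n)) (Fin (2*n) × Fin (2*n)) A)
        + (v - kap n ε / 2)⁻¹ • ((1:Matrix (Fin (2*n)) (Fin (2*n)) A) ⊗ₖ F) := by
    rw [LaxM, Matrix.kronecker_add, Matrix.kronecker_smul, Matrix.one_kronecker_one]
  rw [hL1, hL2]
  show (1 - (u-v)⁻¹ • PA2 n + (u - v - kap n ε)⁻¹ • QA2 n ε) * _ * _ = _
  have m6 : ((1:Matrix (Fin (2*n)) (Fin (2*n)) A) ⊗ₖ F) * ((1:Matrix (Fin (2*n)) (Fin (2*n)) A) ⊗ₖ F)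
      = (k * (k + kap n ε)) • (1 : Matrix (Fin (2*n) × Fin (2*n)) (Fin (2*n) × Fin (2*n)) A)
        + kap n ε • ((1:Matrix (Fin (2*n)) (Fin (2*n)) A) ⊗ₖ F) := by
    rw [one_kron_mul, hsq, Matrix.kronecker_add, Matrix.kronecker_smul, Matrix.kronecker_smul,
      Matrix.one_kronecker_one]
  have m5 := comm_L5 F hε hcomm hanti
  have m3 : QA2 n ε * ((1:Matrix (Fin (2*n)) (Fin (2*n)) A) ⊗ₖ F)
      = -(QA2 n ε * (F ⊗ₖ (1:Matrix (Fin (2*n)) (Fin (2*n)) A))) := by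
    rw [Q_F1_eq F hε hanti, neg_neg]
  have m4 : ((1:Matrix (Fin (2*n)) (Fin (2*n)) A) ⊗ₖ F) * QA2 n ε
      = -((F ⊗ₖ (1:Matrix (Fin (2*n)) (Fin (2*n)) A)) * QA2 n ε) := by
    rw [F1_Q_eq F hε hanti, neg_neg]
  have sc1 : (u-v)⁻¹ * ((u - kap n ε / 2)⁻¹ - (v - kap n ε / 2)⁻¹)
      = -((u - kap n ε / 2)⁻¹ * (v - kap n ε / 2)⁻¹) := by
    have e1 : (u - kap n ε / 2)⁻¹ - (v - kap n ε / 2)⁻¹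
        = -((u - v) * ((u - kap n ε / 2)⁻¹ * (v - kap n ε / 2)⁻¹)) := by
      rw [inv_sub_inv h3 h4, div_eq_mul_inv, mul_inv]
      ring
    rw [e1, mul_neg, ← mul_assoc, inv_mul_cancel₀ h1, one_mul]
  have sc2 : (u - v - kap n ε)⁻¹ * ((u - kap n ε / 2)⁻¹ - (v - kap n ε / 2)⁻¹
        + (u - kap n ε / 2)⁻¹ * (v - kap n ε / 2)⁻¹ * kap n ε)
      = -((u - kap n ε / 2)⁻¹ * (v - kap n ε / 2)⁻¹) := by
    have e2 : (u - kap n ε / 2)⁻¹ - (v - kap n ε / 2)⁻¹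
        + (u - kap n ε / 2)⁻¹ * (v - kap n ε / 2)⁻¹ * kap n ε
        = -((u - v - kap n ε) * ((u - kap n ε / 2)⁻¹ * (v - kap n ε / 2)⁻¹)) := by
      rw [inv_sub_inv h3 h4, div_eq_mul_inv, mul_inv]
      ring
    rw [e2, mul_neg, ← mul_assoc, inv_mul_cancel₀ h2, one_mul]
  exact RLL_core (PA2 n) (QA2 n ε) (F ⊗ₖ (1:Matrix (Fin (2*n)) (Fin (2*n)) A))
    ((1:Matrix (Fin (2*n)) (Fin (2*n)) A) ⊗ₖ F)
    (u-v)⁻¹ (u - v - kap n ε)⁻¹ (u - kap n ε / 2)⁻¹ (v - kap n ε / 2)⁻¹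
    (kap n ε) (k * (k + kap n ε))
    (P_mul_F1 F) (P_mul_F2 F) m3 m4 m6 m5 sc1 sc2
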